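/- For integers 1 ≤ n ≤ N, define A_n^N = Σ_{k=0}^{N-n} (-1)^k · C(n+k, n). Then 2·A_n^N − A_{n-1}^N = (−1)^{N−n} · C(N+1, n). -/

import Mathlib

/-! Write `N = n + d` and induct on `d`. Extending each sum by its next term changes
`2 A_n - A_{n-1}` by `(-1)^(d+1) (2 C(N+1,n) + C(N+1,n-1))`, and Pascal's rule
`C(N+2,n) = C(N+1,n-1) + C(N+1,n)` identifies this with the increment
`(-1)^(d+1) C(N+2,n) - (-1)^d C(N+1,n)` of the right-hand side. -/

/-- `A n N = ∑_{k=0}^{N-n} (-1)^k * C(n+k, n)` as an integer. -/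
def altBinomSum (n N : ℕ) : ℤ :=
  ∑ k ∈ Finset.range (N - n + 1), (-1 : ℤ) ^ k * ((n + k).choose n : ℤ)

theorem altBinomSum_self (n : ℕ) : altBinomSum n n = 1 := by
  simp [altBinomSum]

theorem altBinomSum_add_succ (n d : ℕ) :
    altBinomSum n (n + (d + 1)) =
      altBinomSum n (n + d) + (-1 : ℤ) ^ (d + 1) * ((n + (d + 1)).choose n : ℤ) := by
  simp only [altBinomSum, Nat.add_sub_cancel_left]
  exact Finset.sum_range_succ _ _

theorem two_mul_altBinomSum_succ_sub (m d : ℕ) :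
    2 * altBinomSum (m + 1) (m + 1 + d) - altBinomSum m (m + 1 + d) =
      (-1 : ℤ) ^ d * ((m + 1 + d + 1).choose (m + 1) : ℤ) := by
  induction d with
  | zero =>
    have h : altBinomSum m (m + 1) = 1 - (m + 1) := by
      rw [altBinomSum_add_succ m 0, Nat.add_zero, altBinomSum_self, Nat.choose_succ_self_right]
      push_cast
      ring
    rw [Nat.add_zero, altBinomSum_self, h, Nat.choose_succ_self_right]
    push_cast
    ring
  | succ d ih =>
    have step : altBinomSum m (m + 1 + (d + 1)) =
        altBinomSum m (m + 1 + d) + (-1 : ℤ) ^ (d + 2) * ((m + 1 + (d + 1)).choose m : ℤ) := by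
      have h := altBinomSum_add_succ m (d + 1)
      rwa [show m + (d + 1 + 1) = m + 1 + (d + 1) by omega, show m + (d + 1) = m + 1 + d by omega]
        at h
    have pascal : ((m + 1 + (d + 1) + 1).choose (m + 1) : ℤ) =
        ((m + 1 + (d + 1)).choose m : ℤ) + ((m + 1 + d + 1).choose (m + 1) : ℤ) :=
      mod_cast Nat.choose_succ_succ (m + 1 + (d + 1)) m
    rw [altBinomSum_add_succ (m + 1) d, step, pascal]
    linear_combination ih

theorem stmt1 (n N : ℕ) (hn : 1 ≤ n) (hnN : n ≤ N) :
    2 * altBinomSum n N - altBinomSum (n - 1) N =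
      (-1 : ℤ) ^ (N - n) * ((N + 1).choose n : ℤ) := by
  obtain ⟨m, rfl⟩ : ∃ m, n = m + 1 := ⟨n - 1, by omega⟩
  obtain ⟨d, rfl⟩ := Nat.exists_eq_add_of_le hnN
  simpa using two_mul_altBinomSum_succ_sub m d
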